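/- arXiv:2303.01408 — 2 statements merged into one kernel-verified Lean document; each statement's English description precedes it below -/
import Mathlib

section
/- Let a₁,…,a_m ∈ ℂ* with |aᵢ| ≠ 1, and set F = {(1:0:1), (-1:0:1), (0:1:1), (0:-1:1)} and S = {(aᵢ:1:0), (1:-conj(aᵢ):0) : i = 1,…,m} ∪ F ⊂ ℙ²(ℂ). Then the projective linear map g induced by the matrix with rows (0,-1,0), (1,0,0), (0,0,1) satisfies g(conj(S)) = S, where conj(S) is the image of S under coordinatewise complex conjugation. Consequently the field of moduli of S is ℝ. -/
open Projectivization
open scoped LinearAlgebra.Projectivization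

noncomputable section

abbrev P2 := ℙ ℂ (Fin 3 → ℂ)

/-- Coordinatewise complex conjugation on ℙ²(ℂ). -/
def conjP (p : P2) : P2 :=
  Projectivization.mk ℂ (fun i => starRingEnd ℂ (p.rep i)) (by
    intro h
    apply p.rep_nonzero
    funext i
    have := congrFun h i
    simpa using this)

/-- The four points F = {(1:0:1), (-1:0:1), (0:1:1), (0:-1:1)}. -/
def F : Set P2 :=
  {Projectivization.mk ℂ ![1, 0, 1] (fun h => by have := congrFun h 0; simp at this),
   Projectivization.mk ℂ ![-1, 0, 1] (fun h => by have := congrFun h 2; simp at this),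
   Projectivization.mk ℂ ![0, 1, 1] (fun h => by have := congrFun h 1; simp at this),
   Projectivization.mk ℂ ![0, -1, 1] (fun h => by have := congrFun h 2; simp at this)}

/-- The set S = {(aᵢ:1:0), (1:-conj(aᵢ):0) : i} ∪ F. -/
def Spts (m : ℕ) (a : Fin m → ℂ) : Set P2 :=
  (⋃ i : Fin m,
    {Projectivization.mk ℂ ![a i, 1, 0] (fun h => by have := congrFun h 1; simp at this),
     Projectivization.mk ℂ ![1, -(starRingEnd ℂ (a i)), 0]
       (fun h => by have := congrFun h 0; simp at this)}) ∪ F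

/-- The projective linear map g induced by the matrix with rows (0,-1,0), (1,0,0), (0,0,1). -/
def gEquiv : (Fin 3 → ℂ) ≃ₗ[ℂ] (Fin 3 → ℂ) where
  toFun v := ![-(v 1), v 0, v 2]
  invFun v := ![v 1, -(v 0), v 2]
  map_add' x y := by funext i; fin_cases i <;> simp <;> ring
  map_smul' c x := by funext i; fin_cases i <;> simp <;> ring
  left_inv v := by funext i; fin_cases i <;> simp <;> ring
  right_inv v := by funext i; fin_cases i <;> simp <;> ring

def gP : P2 → P2 := Projectivization.map gEquiv.toLinearMap gEquiv.injective

/-! `g ∘ conj` is induced by the semilinear map `(x, y, z) ↦ (-ȳ, x̄, z̄)`. It swaps `(a : 1 : 0)`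
and `(1 : -ā : 0)`, and permutes `F` cyclically:
`(1 : 0 : 1) ↦ (0 : 1 : 1) ↦ (-1 : 0 : 1) ↦ (0 : -1 : 1) ↦ (1 : 0 : 1)`. -/

open Set ComplexConjugate

lemma conjP_mk (v : Fin 3 → ℂ) (hv : v ≠ 0) :
    conjP (mk ℂ v hv) = mk ℂ (star v) (star_ne_zero.mpr hv) := by
  obtain ⟨c, hc⟩ := exists_smul_eq_mk_rep ℂ v hv
  rw [conjP, mk_eq_mk_iff']
  refine ⟨star (c : ℂ), funext fun i => ?_⟩
  simp [← hc, Units.smul_def]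

lemma gEquiv_apply (v : Fin 3 → ℂ) : gEquiv v = ![-(v 1), v 0, v 2] := rfl

lemma gP_conjP_mk (v : Fin 3 → ℂ) (hv : v ≠ 0) :
    gP (conjP (mk ℂ v hv)) = mk ℂ (gEquiv (star v)) (by simpa using hv) := by
  rw [conjP_mk, gP, map_mk]
  rfl

lemma image_gP_comp_conjP_pair (a : ℂ) (h : ![a, 1, 0] ≠ 0) (h' : ![1, -conj a, 0] ≠ 0) :
    (gP ∘ conjP) '' {mk ℂ ![a, 1, 0] h, mk ℂ ![1, -conj a, 0] h'} =
      {mk ℂ ![a, 1, 0] h, mk ℂ ![1, -conj a, 0] h'} := by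
  simp only [image_pair, Function.comp_apply, gP_conjP_mk, gEquiv_apply, Pi.star_apply,
    Matrix.cons_val, starRingEnd_apply, star_neg, star_one, star_zero, star_star, neg_neg]
  rw [pair_comm]
  congr 2
  exact (mk_eq_mk_iff' ..).2 ⟨-1, by simp⟩

lemma image_gP_comp_conjP_F : (gP ∘ conjP) '' F = F := by
  simp only [F, image_insert_eq, image_singleton, Function.comp_apply, gP_conjP_mk, gEquiv_apply,
    Pi.star_apply, Matrix.cons_val, star_neg, star_one, star_zero, neg_neg, neg_zero]
  ext p
  simp only [mem_insert_iff, mem_singleton_iff]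
  tauto

theorem field_of_moduli_S_is_R_general (m : ℕ) (a : Fin m → ℂ) :
    gP '' (conjP '' Spts m a) = Spts m a ∧
    ∃ T : (Fin 3 → ℂ) ≃ₗ[ℂ] (Fin 3 → ℂ),
      Projectivization.map T.toLinearMap T.injective '' (conjP '' Spts m a) = Spts m a := by
  have hS : gP '' (conjP '' Spts m a) = Spts m a := by
    rw [← image_comp, Spts, image_union, image_iUnion, image_gP_comp_conjP_F]
    simp_rw [image_gP_comp_conjP_pair]
  exact ⟨hS, gEquiv, hS⟩

/-- for a₁,…,a_m ∈ ℂ* with |aᵢ| ≠ 1, the projective linear map g with matrix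
rows (0,-1,0),(1,0,0),(0,0,1) satisfies g(conj(S)) = S for
S = {(aᵢ:1:0), (1:-conj(aᵢ):0)} ∪ {(±1:0:1),(0:±1:1)}; consequently S is projectively
equivalent to its complex conjugate, i.e. the field of moduli of S is ℝ. -/
theorem field_of_moduli_S_is_R (m : ℕ) (a : Fin m → ℂ)
    (ha0 : ∀ i, a i ≠ 0) (ha1 : ∀ i, ‖a i‖ ≠ 1) :
    gP '' (conjP '' Spts m a) = Spts m a ∧
    ∃ T : (Fin 3 → ℂ) ≃ₗ[ℂ] (Fin 3 → ℂ),
      Projectivization.map T.toLinearMap T.injective '' (conjP '' Spts m a) = Spts m a :=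
  field_of_moduli_S_is_R_general m a

end
end

section
/- The subgroup of GL₂(ℂ) (acting on ℙ²(ℂ) by acting on the first two coordinates and fixing the third) stabilizing the set F = {(1:0:1), (-1:0:1), (0:1:1), (0:-1:1)} setwise is a dihedral group of order 8, generated by the rotation (x,y) ↦ (-y,x) and the reflection (x,y) ↦ (y,x). -/
noncomputable section

/-- The rotation (x,y) ↦ (-y,x) as an element of GL₂(ℂ). -/
def r : GL (Fin 2) ℂ :=
  ⟨!![0,-1;1,0], !![0,1;-1,0],
    by norm_num [Matrix.mul_fin_two, ← Matrix.one_fin_two],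
    by norm_num [Matrix.mul_fin_two, ← Matrix.one_fin_two]⟩

/-- The reflection (x,y) ↦ (y,x) as an element of GL₂(ℂ). -/
def s : GL (Fin 2) ℂ :=
  ⟨!![0,1;1,0], !![0,1;1,0],
    by norm_num [Matrix.mul_fin_two, ← Matrix.one_fin_two],
    by norm_num [Matrix.mul_fin_two, ← Matrix.one_fin_two]⟩

/-- The affine representatives of F = {(1:0:1), (-1:0:1), (0:1:1), (0:-1:1)} in ℂ². -/
def V : Set (Fin 2 → ℂ) := {![1,0], ![-1,0], ![0,1], ![0,-1]}

/-!
Write `V = {±e₀, ±e₁}`. The rotation `r` permutes `V` transitively, so any `A` stabilizing `V`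
becomes, after multiplication by a power of `r`, a matrix `B` stabilizing `V` and fixing `e₀`.
By injectivity `B e₁ ≠ ±e₀`, so `B e₁ = ±e₁` and `B` is `1` or `s r = diag(1, -1)`; hence the
stabilizer is `⟨r, s⟩`. The relations `r⁴ = s² = 1`, `s r s = r⁻¹` give a homomorphism from `D₄`
onto `⟨r, s⟩`, which is injective because `r` has order `4` and `s`, of determinant `-1`, is not a
power of `r`.
-/

section ZModPowers

variable {G : Type*} [Group G] {n : ℕ} {a b : G}

def zmodPowersHom (ha : a ^ n = 1) : Multiplicative (ZMod n) →* G :=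
  AddMonoidHom.toMultiplicativeLeft
    (ZMod.lift n ⟨zmultiplesHom _ (Additive.ofMul a), by simp [← ofMul_pow, ha]⟩)

lemma zmodPowersHom_intCast (ha : a ^ n = 1) (k : ℤ) :
    zmodPowersHom ha (.ofAdd (k : ZMod n)) = a ^ k := by
  simp [zmodPowersHom, ZMod.lift_coe]

lemma zmodPowersHom_mem_zpowers (ha : a ^ n = 1) (i : ZMod n) :
    zmodPowersHom ha (.ofAdd i) ∈ Subgroup.zpowers a := by
  obtain ⟨k, rfl⟩ := ZMod.intCast_surjective i
  rw [zmodPowersHom_intCast]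
  exact zpow_mem (Subgroup.mem_zpowers a) k

lemma zmodPowersHom_injective (ha : orderOf a = n) :
    Function.Injective (zmodPowersHom (ha ▸ pow_orderOf_eq_one a)) := by
  rw [injective_iff_map_eq_one]
  intro i hi
  obtain ⟨k, hk⟩ := ZMod.intCast_surjective i.toAdd
  rw [← ofAdd_toAdd i, ← hk, zmodPowersHom_intCast, ← orderOf_dvd_iff_zpow_eq_one, ha] at hi
  rw [← ofAdd_toAdd i, ← hk, (ZMod.intCast_zmod_eq_zero_iff_dvd k n).mpr hi, ofAdd_zero]

lemma zmodPowersHom_mul_eq_mul_zmodPowersHom_neg (ha : a ^ n = 1) (hb : b * b = 1)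
    (hab : b * a * b = a⁻¹) (i : ZMod n) :
    zmodPowersHom ha (.ofAdd i) * b = b * zmodPowersHom ha (.ofAdd (-i)) := by
  obtain ⟨k, rfl⟩ := ZMod.intCast_surjective i
  have hb_inv : b⁻¹ = b := inv_eq_of_mul_eq_one_right hb
  have hconj : MulAut.conj b a = a⁻¹ := by rw [MulAut.conj_apply, hb_inv, hab]
  have hconj_pow : b * a ^ (-k) * b⁻¹ = a ^ k := by
    rw [← MulAut.conj_apply, map_zpow, hconj, inv_zpow', neg_neg]
  rw [hb_inv] at hconj_pow
  rw [← Int.cast_neg, zmodPowersHom_intCast, zmodPowersHom_intCast, ← hconj_pow, mul_assoc,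
    hb, mul_one]

end ZModPowers

namespace DihedralGroup

section Lift

variable {G : Type*} [Group G] {n : ℕ} {a b : G}
  (ha : a ^ n = 1) (hb : b * b = 1) (hab : b * a * b = a⁻¹)

def lift : DihedralGroup n →* G where
  toFun
    | r i => zmodPowersHom ha (.ofAdd i)
    | sr i => b * zmodPowersHom ha (.ofAdd i)
  map_one' := map_one _
  map_mul' := by
    have hcomm := zmodPowersHom_mul_eq_mul_zmodPowersHom_neg ha hb hab
    rintro (i | i) (j | j) <;>
      simp only [r_mul_r, r_mul_sr, sr_mul_r, sr_mul_sr, sub_eq_neg_add, ofAdd_add, map_mul]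
    · rw [← mul_assoc (zmodPowersHom ha _), hcomm, mul_assoc]
    · rw [mul_assoc]
    · rw [mul_assoc b, ← mul_assoc (zmodPowersHom ha _), hcomm, ← mul_assoc, ← mul_assoc, hb,
        one_mul]

@[simp] lemma lift_r (i : ZMod n) : lift ha hb hab (r i) = zmodPowersHom ha (.ofAdd i) := rfl

@[simp] lemma lift_sr (i : ZMod n) : lift ha hb hab (sr i) = b * zmodPowersHom ha (.ofAdd i) :=
  rfl

lemma range_lift : (lift ha hb hab).range = Subgroup.closure {a, b} := by
  have hzpowers : Subgroup.zpowers a ≤ Subgroup.closure {a, b} :=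
    Subgroup.zpowers_le.mpr (Subgroup.subset_closure (by simp))
  have hb_mem : b ∈ Subgroup.closure {a, b} := Subgroup.subset_closure (by simp)
  apply le_antisymm
  · rintro _ ⟨i | i, rfl⟩
    · exact hzpowers (zmodPowersHom_mem_zpowers ha i)
    · exact mul_mem hb_mem (hzpowers (zmodPowersHom_mem_zpowers ha i))
  · rw [Subgroup.closure_le]
    rintro _ (rfl | rfl)
    · exact ⟨r 1, by simpa using zmodPowersHom_intCast ha 1⟩
    · exact ⟨sr 0, by simp⟩

end Lift

lemma lift_injective {G : Type*} [Group G] {n : ℕ} {a b : G} (ha : orderOf a = n)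
    (hb : b * b = 1) (hab : b * a * b = a⁻¹) (hb_not_mem : b ∉ Subgroup.zpowers a) :
    Function.Injective (lift (ha ▸ pow_orderOf_eq_one a) hb hab) := by
  rw [injective_iff_map_eq_one]
  rintro (i | i) hi
  · have : Multiplicative.ofAdd i = 1 := zmodPowersHom_injective ha (hi.trans (map_one _).symm)
    rw [ofAdd_eq_one.mp this, r_zero]
  · refine absurd ?_ hb_not_mem
    rw [eq_inv_of_mul_eq_one_left hi]
    exact inv_mem (zmodPowersHom_mem_zpowers _ i)

end DihedralGroup

lemma Matrix.GeneralLinearGroup.ext_of_smul_single {n R : Type*} [Fintype n] [DecidableEq n]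
    [CommRing R] {A B : GL n R} (h : ∀ j, A • (Pi.single j 1 : n → R) = B • Pi.single j 1) :
    A = B :=
  Units.ext (Matrix.ext_of_mulVec_single h)

open Pointwise

local notation "e₀" => (Pi.single 0 1 : Fin 2 → ℂ)
local notation "e₁" => (Pi.single 1 1 : Fin 2 → ℂ)

lemma ext_of_smul_e₀_e₁ {A B : GL (Fin 2) ℂ} (h₀ : A • e₀ = B • e₀) (h₁ : A • e₁ = B • e₁) :
    A = B :=
  Matrix.GeneralLinearGroup.ext_of_smul_single (Fin.forall_fin_two.mpr ⟨h₀, h₁⟩)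

lemma e₁_ne_e₀ : e₁ ≠ e₀ := by
  intro h; simpa using congrFun h 0

lemma e₁_ne_neg_e₀ : e₁ ≠ -e₀ := by
  intro h; simpa using congrFun h 0

lemma neg_e₀_ne_e₀ : -e₀ ≠ e₀ := by
  intro h; have := congrFun h 0; norm_num at this

lemma V_eq : V = {e₀, -e₀, e₁, -e₁} := by
  have h₀ : (![1, 0] : Fin 2 → ℂ) = e₀ := by ext i; fin_cases i <;> simp
  have h₁ : (![0, 1] : Fin 2 → ℂ) = e₁ := by ext i; fin_cases i <;> simp
  have h₂ : (![-1, 0] : Fin 2 → ℂ) = -e₀ := by ext i; fin_cases i <;> simp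
  have h₃ : (![0, -1] : Fin 2 → ℂ) = -e₁ := by ext i; fin_cases i <;> simp
  rw [V, h₀, h₁, h₂, h₃]

lemma smul_V (A : GL (Fin 2) ℂ) : A • V = {A • e₀, -(A • e₀), A • e₁, -(A • e₁)} := by
  simp [V_eq, Set.smul_set_insert, smul_neg]

lemma smul_mem_V {A : GL (Fin 2) ℂ} (hA : A ∈ MulAction.stabilizer (GL (Fin 2) ℂ) V)
    {v : Fin 2 → ℂ} (hv : v ∈ V) : A • v ∈ V := by
  rw [← MulAction.mem_stabilizer_iff.mp hA]
  exact Set.smul_mem_smul_set hv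

lemma r_smul_e₀ : r • e₀ = e₁ := by
  ext i; fin_cases i <;> simp [r, Units.smul_def]

lemma r_smul_e₁ : r • e₁ = -e₀ := by
  ext i; fin_cases i <;> simp [r, Units.smul_def]

lemma s_smul_e₀ : s • e₀ = e₁ := by
  ext i; fin_cases i <;> simp [s, Units.smul_def]

lemma s_smul_e₁ : s • e₁ = e₀ := by
  ext i; fin_cases i <;> simp [s, Units.smul_def]

lemma r_sq_smul_e₀ : r ^ 2 • e₀ = -e₀ := by
  rw [pow_two, mul_smul, r_smul_e₀, r_smul_e₁]

lemma r_mem_stabilizer : r ∈ MulAction.stabilizer (GL (Fin 2) ℂ) V := by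
  rw [MulAction.mem_stabilizer_iff, smul_V, r_smul_e₀, r_smul_e₁, neg_neg, V_eq]
  ext v; simp only [Set.mem_insert_iff, Set.mem_singleton_iff]; tauto

lemma s_mem_stabilizer : s ∈ MulAction.stabilizer (GL (Fin 2) ℂ) V := by
  rw [MulAction.mem_stabilizer_iff, smul_V, s_smul_e₀, s_smul_e₁, V_eq]
  ext v; simp only [Set.mem_insert_iff, Set.mem_singleton_iff]; tauto

lemma closure_le_stabilizer :
    Subgroup.closure {r, s} ≤ MulAction.stabilizer (GL (Fin 2) ℂ) V := by
  rw [Subgroup.closure_le]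
  rintro _ (rfl | rfl)
  exacts [r_mem_stabilizer, s_mem_stabilizer]

lemma exists_r_pow_smul_e₀_eq {v : Fin 2 → ℂ} (hv : v ∈ V) : ∃ k : ℕ, r ^ k • e₀ = v := by
  rw [V_eq] at hv
  rcases hv with rfl | rfl | rfl | rfl
  · exact ⟨0, one_smul _ _⟩
  · exact ⟨2, r_sq_smul_e₀⟩
  · exact ⟨1, by rw [pow_one, r_smul_e₀]⟩
  · exact ⟨3, by rw [pow_succ, mul_smul, r_smul_e₀, pow_two, mul_smul, r_smul_e₁, smul_neg,
      r_smul_e₀]⟩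

lemma eq_one_or_eq_s_mul_r {B : GL (Fin 2) ℂ} (hB : B ∈ MulAction.stabilizer (GL (Fin 2) ℂ) V)
    (h₀ : B • e₀ = e₀) : B = 1 ∨ B = s * r := by
  have h₁ : B • e₁ ∈ V := smul_mem_V hB (by simp [V_eq])
  rw [V_eq] at h₁
  rcases h₁ with h₁ | h₁ | h₁ | h₁
  · rw [← h₀, smul_left_cancel_iff] at h₁
    exact absurd h₁ e₁_ne_e₀
  · rw [← h₀, ← smul_neg, smul_left_cancel_iff] at h₁
    exact absurd h₁ e₁_ne_neg_e₀
  · exact .inl (ext_of_smul_e₀_e₁ (by rw [h₀, one_smul]) (by rw [h₁, one_smul]))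
  · exact .inr (ext_of_smul_e₀_e₁ (by rw [h₀, mul_smul, r_smul_e₀, s_smul_e₁])
      (by rw [h₁, mul_smul, r_smul_e₁, smul_neg, s_smul_e₀]))

lemma stabilizer_le_closure :
    MulAction.stabilizer (GL (Fin 2) ℂ) V ≤ Subgroup.closure {r, s} := by
  intro A hA
  have hr : r ∈ Subgroup.closure {r, s} := Subgroup.subset_closure (by simp)
  have hs : s ∈ Subgroup.closure {r, s} := Subgroup.subset_closure (by simp)
  obtain ⟨k, hk⟩ := exists_r_pow_smul_e₀_eq (smul_mem_V hA (v := e₀) (by simp [V_eq]))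
  have hB : (r ^ k)⁻¹ * A ∈ MulAction.stabilizer (GL (Fin 2) ℂ) V :=
    mul_mem (inv_mem (closure_le_stabilizer (pow_mem hr k))) hA
  have hBe₀ : ((r ^ k)⁻¹ * A) • e₀ = e₀ := by rw [mul_smul, ← hk, inv_smul_smul]
  rw [← mul_inv_cancel_left (r ^ k) A]
  refine mul_mem (pow_mem hr k) ?_
  rcases eq_one_or_eq_s_mul_r hB hBe₀ with h | h <;> rw [h]
  exacts [one_mem _, mul_mem hs hr]

lemma stabilizer_eq_closure :
    MulAction.stabilizer (GL (Fin 2) ℂ) V = Subgroup.closure {r, s} :=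
  le_antisymm stabilizer_le_closure closure_le_stabilizer

lemma r_pow_four : r ^ 4 = 1 := by
  refine ext_of_smul_e₀_e₁ ?_ ?_ <;>
    simp only [one_smul, show 4 = 2 + 2 from rfl, pow_add, mul_smul, pow_two, r_smul_e₀,
      r_smul_e₁, smul_neg, neg_neg]

lemma orderOf_r : orderOf r = 4 :=
  orderOf_eq_prime_pow (p := 2) (n := 1)
    (fun h => neg_e₀_ne_e₀ (by rw [pow_one] at h; rw [← r_sq_smul_e₀, h, one_smul])) r_pow_four

lemma s_mul_s : s * s = 1 :=
  ext_of_smul_e₀_e₁ (by rw [mul_smul, s_smul_e₀, s_smul_e₁, one_smul])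
    (by rw [mul_smul, s_smul_e₁, s_smul_e₀, one_smul])

lemma s_mul_r_mul_s : s * r * s = r⁻¹ := by
  refine eq_inv_of_mul_eq_one_left (ext_of_smul_e₀_e₁ ?_ ?_) <;>
    simp only [mul_smul, one_smul, r_smul_e₀, r_smul_e₁, s_smul_e₀, s_smul_e₁, smul_neg, neg_neg]

lemma s_not_mem_zpowers_r : s ∉ Subgroup.zpowers r := by
  have hdet_r : Matrix.GeneralLinearGroup.det r = 1 := Units.ext (by simp [r, Matrix.det_fin_two])
  have hdet_s : Matrix.GeneralLinearGroup.det s = -1 :=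
    Units.ext (by simp [s, Matrix.det_fin_two])
  rintro ⟨k, hk⟩
  have h := congrArg (fun A => (Matrix.GeneralLinearGroup.det A : ℂ)) hk
  norm_num [map_zpow, hdet_r, hdet_s] at h

/-- the subgroup of GL₂(ℂ) (acting on ℙ²(ℂ) through the block embedding
GL₂ ⊂ PGL₃ fixing the third coordinate) stabilizing F setwise — equivalently, stabilizing
V = {(1,0),(-1,0),(0,1),(0,-1)} ⊂ ℂ² — is the dihedral group of order 8 generated by the
rotation r : (x,y) ↦ (-y,x) and the reflection s : (x,y) ↦ (y,x). -/
theorem stabilizer_of_F_is_dihedral :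
    {A : GL (Fin 2) ℂ | (fun v => A.val.mulVec v) '' V = V}
      = (Subgroup.closure {r, s} : Subgroup (GL (Fin 2) ℂ)) ∧
    Nonempty ((Subgroup.closure {r, s} : Subgroup (GL (Fin 2) ℂ)) ≃* DihedralGroup 4) := by
  refine ⟨?_, ⟨?_⟩⟩
  · rw [← stabilizer_eq_closure]
    ext A
    simp [MulAction.mem_stabilizer_iff, ← Set.image_smul, Units.smul_def]
  · exact (MulEquiv.subgroupCongr (DihedralGroup.range_lift _ s_mul_s s_mul_r_mul_s).symm).trans
      (MonoidHom.ofInjective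
        (DihedralGroup.lift_injective orderOf_r s_mul_s s_mul_r_mul_s s_not_mem_zpowers_r)).symm

end
end
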